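/- Let f : ℝⁿ → ℝ and G : ℝⁿ → S^m be twice continuously differentiable. Let (x,Λ) ∈ ℝⁿ × S^m be a KKT pair of (P1) satisfying strict complementarity (rank G(x) + rank Λ = m), and assume that ⟨∇²ₓL(x,Λ)v, v⟩ + 2⟨W∘W, Λ⟩ > 0 for every nonzero (v,W) ∈ ℝⁿ × S^m with DG(x)v − 2√G(x)∘W = 0. Then x is a local minimum of (P1), i.e., a local minimum of f on the set {x' ∈ ℝⁿ : G(x') is PSD}. -/

import Mathlib

open Matrix

noncomputable section

def jmul {m : ℕ} (A B : Matrix (Fin m) (Fin m) ℝ) : Matrix (Fin m) (Fin m) ℝ :=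
  (1 / 2 : ℝ) • (A * B + B * A)

def minner {m : ℕ} (A B : Matrix (Fin m) (Fin m) ℝ) : ℝ :=
  (A * B).trace

def memPhi {m : ℕ} (Λ Y : Matrix (Fin m) (Fin m) ℝ) : Prop :=
  ∀ W : Matrix (Fin m) (Fin m) ℝ, W.IsSymm → W ≠ 0 → jmul Y W = 0 →
    0 < minner (jmul W W) Λ

def pderivG {n m : ℕ} (G : (Fin n → ℝ) → Matrix (Fin m) (Fin m) ℝ)
    (x : Fin n → ℝ) (k : Fin n) : Matrix (Fin m) (Fin m) ℝ :=
  Matrix.of fun i j => fderiv ℝ (fun y => G y i j) x (Pi.single k 1)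

def dirDerivG {n m : ℕ} (G : (Fin n → ℝ) → Matrix (Fin m) (Fin m) ℝ)
    (x v : Fin n → ℝ) : Matrix (Fin m) (Fin m) ℝ :=
  ∑ k, v k • pderivG G x k

def adjDG {n m : ℕ} (G : (Fin n → ℝ) → Matrix (Fin m) (Fin m) ℝ)
    (x : Fin n → ℝ) (W : Matrix (Fin m) (Fin m) ℝ) : Fin n → ℝ :=
  fun k => minner (pderivG G x k) W

def gradf {n : ℕ} (f : (Fin n → ℝ) → ℝ) (x : Fin n → ℝ) : Fin n → ℝ :=
  fun k => fderiv ℝ f x (Pi.single k 1)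

def KKT1 {n m : ℕ} (f : (Fin n → ℝ) → ℝ) (G : (Fin n → ℝ) → Matrix (Fin m) (Fin m) ℝ)
    (x : Fin n → ℝ) (Λ : Matrix (Fin m) (Fin m) ℝ) : Prop :=
  gradf f x = adjDG G x Λ ∧ Λ.PosSemidef ∧ (G x).PosSemidef ∧ jmul Λ (G x) = 0

def KKT2 {n m : ℕ} (f : (Fin n → ℝ) → ℝ) (G : (Fin n → ℝ) → Matrix (Fin m) (Fin m) ℝ)
    (x : Fin n → ℝ) (Y Λ : Matrix (Fin m) (Fin m) ℝ) : Prop :=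
  gradf f x = adjDG G x Λ ∧ jmul Λ Y = 0 ∧ G x = jmul Y Y

def hessQ {n m : ℕ} (f : (Fin n → ℝ) → ℝ) (G : (Fin n → ℝ) → Matrix (Fin m) (Fin m) ℝ)
    (Λ : Matrix (Fin m) (Fin m) ℝ) (x v : Fin n → ℝ) : ℝ :=
  iteratedFDeriv ℝ 2 (fun y => f y - minner (G y) Λ) x ![v, v]

def SOSCNLP {n m : ℕ} (f : (Fin n → ℝ) → ℝ) (G : (Fin n → ℝ) → Matrix (Fin m) (Fin m) ℝ)
    (x : Fin n → ℝ) (Y Λ : Matrix (Fin m) (Fin m) ℝ) : Prop :=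
  ∀ (v : Fin n → ℝ) (W : Matrix (Fin m) (Fin m) ℝ), W.IsSymm →
    ¬(v = 0 ∧ W = 0) → dirDerivG G x v = (2 : ℝ) • jmul Y W →
    0 < hessQ f G Λ x v + 2 * minner (jmul W W) Λ

def SONCNLP {n m : ℕ} (f : (Fin n → ℝ) → ℝ) (G : (Fin n → ℝ) → Matrix (Fin m) (Fin m) ℝ)
    (x : Fin n → ℝ) (Y Λ : Matrix (Fin m) (Fin m) ℝ) : Prop :=
  ∀ (v : Fin n → ℝ) (W : Matrix (Fin m) (Fin m) ℝ), W.IsSymm →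
    dirDerivG G x v = (2 : ℝ) • jmul Y W →
    0 ≤ hessQ f G Λ x v + 2 * minner (jmul W W) Λ

def LICQ {n m : ℕ} (G : (Fin n → ℝ) → Matrix (Fin m) (Fin m) ℝ)
    (x : Fin n → ℝ) (Y : Matrix (Fin m) (Fin m) ℝ) : Prop :=
  ∀ W : Matrix (Fin m) (Fin m) ℝ, W.IsSymm → jmul Y W = 0 → adjDG G x W = 0 → W = 0

def Nondeg {n m : ℕ} (G : (Fin n → ℝ) → Matrix (Fin m) (Fin m) ℝ)
    (x : Fin n → ℝ) : Prop :=
  ∀ W : Matrix (Fin m) (Fin m) ℝ, W.IsSymm → G x * W = 0 → adjDG G x W = 0 → W = 0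

def CritCone {n m : ℕ} (f : (Fin n → ℝ) → ℝ) (G : (Fin n → ℝ) → Matrix (Fin m) (Fin m) ℝ)
    (x : Fin n → ℝ) : Set (Fin n → ℝ) :=
  {d | (∀ u : Fin m → ℝ, G x *ᵥ u = 0 → 0 ≤ u ⬝ᵥ (dirDerivG G x d *ᵥ u)) ∧
    gradf f x ⬝ᵥ d = 0}

def IsMPInv {m : ℕ} (A P : Matrix (Fin m) (Fin m) ℝ) : Prop :=
  A * P * A = A ∧ P * A * P = P ∧ (A * P)ᵀ = A * P ∧ (P * A)ᵀ = P * A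

def Hmat {n m : ℕ} (G : (Fin n → ℝ) → Matrix (Fin m) (Fin m) ℝ)
    (x : Fin n → ℝ) (Λ P : Matrix (Fin m) (Fin m) ℝ) : Matrix (Fin n) (Fin n) ℝ :=
  Matrix.of fun i j => 2 * (pderivG G x i * P * pderivG G x j * Λ).trace

/-- The PSD square root `Matrix.PosSemidef.sqrt` of the older Mathlib (since removed), with its old definition. -/
def psdSqrt {m : ℕ} {A : Matrix (Fin m) (Fin m) ℝ} (hA : A.PosSemidef) : Matrix (Fin m) (Fin m) ℝ :=
  (hA.1.eigenvectorUnitary : Matrix (Fin m) (Fin m) ℝ) *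
    diagonal ((↑) ∘ Real.sqrt ∘ hA.1.eigenvalues) *
    (star hA.1.eigenvectorUnitary : Matrix (Fin m) (Fin m) ℝ)

/-! Feasible points are written as `G y = Z * Z` with `Z = √(G y)`, and `Z → Y := √(G x)` by
continuity of the square root on the PSD cone. Complementarity forces `Λ Y = Y Λ = 0`, hence for
feasible `y`, with `Δ = Z - Y`,
  `f y - f x = L y - L x + ⟪Δ², Λ⟫`,
where `∇L(x) = 0`. If `x` is not a local minimum, normalise the pairs `(y - x, Δ)` of feasible
points with `f y < f x` and pass to a limit `(v, W) ≠ 0` along an ultrafilter. Dividing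
`G y - G x = YΔ + ΔY + Δ²` by the scale gives `DG(x) v = 2 Y ∘ W`, and dividing the identity above
by the squared scale and using Taylor's formula for `L` gives `⟪∇²L v, v⟫ + 2⟪W ∘ W, Λ⟫ ≤ 0`,
contradicting the second-order condition. -/

open Set Filter Topology
open scoped MatrixOrder ComplexOrder

namespace Matrix

variable {ι 𝕜 : Type*} [Fintype ι] [RCLike 𝕜]

theorem isClosed_setOf_posSemidef : IsClosed {A : Matrix ι ι 𝕜 | A.PosSemidef} := by
  simp only [posSemidef_iff_dotProduct_mulVec, ofPred_and, ofPred_forall]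
  exact (isClosed_eq continuous_id.matrix_conjTranspose continuous_id).inter
    (isClosed_iInter fun v => isClosed_le continuous_const (by fun_prop))

theorem IsSymm.sq_apply_le_mul_self_apply {S : Matrix ι ι ℝ} (hS : S.IsSymm) (i j : ι) :
    S i j ^ 2 ≤ (S * S) i i := by
  rw [mul_apply]
  calc S i j ^ 2 = S i j * S j i := by rw [hS.apply i j]; ring
  _ ≤ ∑ k, S i k * S k i := Finset.single_le_sum (f := fun k => S i k * S k i)
      (fun k _ => by rw [hS.apply i k]; exact mul_self_nonneg _) (Finset.mem_univ j)

variable [DecidableEq ι]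

theorem PosSemidef.mul_eq_zero_of_trace_mul_mul_self_eq_zero {A B : Matrix ι ι 𝕜}
    (hA : A.PosSemidef) (hB : B.IsHermitian) (h : (A * (B * B)).trace = 0) : A * B = 0 := by
  set R := CFC.sqrt A
  have hRR : R * R = A := CFC.sqrt_mul_sqrt_self A hA.nonneg
  have hR : Rᴴ = R := (CFC.sqrt_nonneg A).posSemidef.isHermitian
  have hRB : R * B = 0 := by
    have hBAB : (R * B)ᴴ * (R * B) = B * A * B := by
      rw [conjTranspose_mul, hR, hB.eq, ← hRR]; noncomm_ring
    rw [← trace_conjTranspose_mul_self_eq_zero_iff, hBAB, trace_mul_cycle, trace_mul_comm, h]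
  rw [← hRR, Matrix.mul_assoc, hRB, Matrix.mul_zero]

theorem isSymm_cfcSqrt (A : Matrix ι ι ℝ) : (CFC.sqrt A).IsSymm :=
  isHermitian_iff_isSymm.1 (CFC.sqrt_nonneg A).posSemidef.isHermitian

theorem tendsto_cfcSqrt {α : Type*} {l : Filter α} {A : α → Matrix ι ι ℝ} {A₀ : Matrix ι ι ℝ}
    (hA : Tendsto A l (𝓝 A₀)) (hpsd : ∀ᶠ a in l, 0 ≤ A a) :
    Tendsto (fun a => CFC.sqrt (A a)) l (𝓝 (CFC.sqrt A₀)) := by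
  -- `√(A a)` eventually lies in a compact box, and a limit `T` along any ultrafilter is PSD with
  -- `T * T = A₀`, hence is `√A₀`.
  set K : Set (Matrix ι ι ℝ) :=
    univ.pi fun i => univ.pi fun _ => Icc (-√(A₀ i i + 1)) √(A₀ i i + 1)
  have hK : IsCompact K := isCompact_univ_pi fun _ => isCompact_univ_pi fun _ => isCompact_Icc
  have hdiag : ∀ᶠ a in l, ∀ i, A a i i ≤ A₀ i i + 1 := eventually_all.2 fun i =>
    ((hA.apply_nhds i).apply_nhds i).eventually (ge_mem_nhds (lt_add_one _))
  have hmem : ∀ᶠ a in l, CFC.sqrt (A a) ∈ K := by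
    filter_upwards [hpsd, hdiag] with a ha hai
    refine mem_univ_pi.2 fun i => mem_univ_pi.2 fun j => abs_le.1 ?_
    refine Real.abs_le_sqrt ?_
    calc CFC.sqrt (A a) i j ^ 2 ≤ (CFC.sqrt (A a) * CFC.sqrt (A a)) i i :=
          (isSymm_cfcSqrt _).sq_apply_le_mul_self_apply i j
    _ = A a i i := by rw [CFC.sqrt_mul_sqrt_self _ ha]
    _ ≤ A₀ i i + 1 := hai i
  rw [tendsto_iff_ultrafilter]
  intro U hU
  obtain ⟨T, -, hT⟩ := hK.ultrafilter_le_nhds (U.map _) (le_principal_iff.2 (hU hmem))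
  change Tendsto (fun a => CFC.sqrt (A a)) U (𝓝 T) at hT
  have hTT : T * T = A₀ := by
    refine tendsto_nhds_unique (hT.mul hT) ((hA.mono_left hU).congr' ?_)
    filter_upwards [hU hpsd] with a ha using (CFC.sqrt_mul_sqrt_self _ ha).symm
  have hT₀ : 0 ≤ T := by
    refine (isClosed_setOf_posSemidef.mem_of_tendsto hT ?_).nonneg
    filter_upwards [hU Filter.univ_mem] with a _ using (CFC.sqrt_nonneg _).posSemidef
  rwa [CFC.sqrt_unique hTT hT₀]

end Matrix

theorem psdSqrt_eq_cfcSqrt {m : ℕ} {A : Matrix (Fin m) (Fin m) ℝ} (hA : A.PosSemidef) :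
    psdSqrt hA = CFC.sqrt A := by
  rw [CFC.sqrt_eq_cfc, cfc_nnreal_eq_real _ A, hA.1.cfc_eq]
  simp only [IsHermitian.cfc, Unitary.conjStarAlgAut_apply, psdSqrt]
  congr 2
  ext i j
  simp only [diagonal_apply]
  split_ifs
  · simp [Real.coe_sqrt, Real.coe_toNNReal', max_eq_left (hA.eigenvalues_nonneg i)]
  · rfl

section SecondOrder

variable {E : Type*} [NormedAddCommGroup E] [NormedSpace ℝ E] {L : E → ℝ}

theorem ContDiff.exists_eq_add_fderiv_add_fderiv_fderiv_div_two (hL : ContDiff ℝ 2 L) (x h : E) :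
    ∃ c ∈ Ioo (0 : ℝ) 1,
      L (x + h) = L x + fderiv ℝ L x h + fderiv ℝ (fderiv ℝ L) (x + c • h) h h / 2 := by
  have hline : ∀ s : ℝ, HasDerivAt (fun s : ℝ => x + s • h) h s := fun s => by
    simpa using ((hasDerivAt_id s).smul_const h).const_add x
  have hL₁ : ∀ s : ℝ, HasDerivAt (fun s => L (x + s • h)) (fderiv ℝ L (x + s • h) h) s :=
    fun s => ((hL.differentiable two_ne_zero _).hasFDerivAt).comp_hasDerivAt s (hline s)
  have hL₂ : ∀ s : ℝ, HasDerivAt (fun s => fderiv ℝ L (x + s • h) h)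
      (fderiv ℝ (fderiv ℝ L) (x + s • h) h h) s := fun s => by
    have := (((hL.fderiv_right (by norm_num)).differentiable one_ne_zero _).hasFDerivAt
      ).comp_hasDerivAt s (hline s)
    simpa using this.clm_apply (hasDerivAt_const s h)
  obtain ⟨c, hc, hgc⟩ := taylor_mean_remainder_lagrange_iteratedDeriv
    (f := fun s => L (x + s • h)) (n := 1) zero_ne_one (hL.comp (by fun_prop)).contDiffOn
  rw [uIoo_of_le zero_le_one] at hc
  refine ⟨c, hc, ?_⟩
  have hd₂ : iteratedDeriv 2 (fun s => L (x + s • h)) c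
      = fderiv ℝ (fderiv ℝ L) (x + c • h) h h := by
    rw [iteratedDeriv_succ, iteratedDeriv_one, funext fun s => (hL₁ s).deriv, (hL₂ c).deriv]
  rw [taylor_within_apply, hd₂, uIcc_of_le zero_le_one] at hgc
  simp only [Finset.sum_range_succ, Finset.range_one, Finset.sum_singleton,
    iteratedDerivWithin_zero, iteratedDerivWithin_one,
    (hL₁ 0).hasDerivWithinAt.derivWithin (uniqueDiffOn_Icc zero_lt_one 0 (by simp))] at hgc
  norm_num at hgc
  linarith

theorem ContDiff.tendsto_sub_div_sq (hL : ContDiff ℝ 2 L) {x : E} (hx : fderiv ℝ L x = 0)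
    {α : Type*} {l : Filter α} {t : α → ℝ} {d : α → E} {d₀ : E} (ht : Tendsto t l (𝓝 0))
    (ht₀ : ∀ᶠ a in l, t a ≠ 0) (hd : Tendsto d l (𝓝 d₀)) :
    Tendsto (fun a => (L (x + t a • d a) - L x) / t a ^ 2) l
      (𝓝 (fderiv ℝ (fderiv ℝ L) x d₀ d₀ / 2)) := by
  choose c hc hLc using fun a => hL.exists_eq_add_fderiv_add_fderiv_fderiv_div_two x (t a • d a)
  have hct : Tendsto (fun a => c a * t a) l (𝓝 0) := by
    refine squeeze_zero_norm (fun a => ?_) (tendsto_zero_iff_norm_tendsto_zero.1 ht)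
    rw [norm_mul, Real.norm_of_nonneg (hc a).1.le]
    exact mul_le_of_le_one_left (norm_nonneg _) (hc a).2.le
  have hz : Tendsto (fun a => x + c a • t a • d a) l (𝓝 x) := by
    simpa [smul_smul] using tendsto_const_nhds.add (hct.smul hd)
  have hL₂ : Tendsto (fun a => fderiv ℝ (fderiv ℝ L) (x + c a • t a • d a) (d a) (d a) / 2) l
      (𝓝 (fderiv ℝ (fderiv ℝ L) x d₀ d₀ / 2)) := by
    have happ := (isBoundedBilinearMap_apply (𝕜 := ℝ) (E := E) (F := ℝ)).continuous
    have happ₂ := (isBoundedBilinearMap_apply (𝕜 := ℝ) (E := E) (F := E →L[ℝ] ℝ)).continuous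
    have hL₂x := ((hL.fderiv_right (m := 1) (by norm_num)).continuous_fderiv one_ne_zero).tendsto x
    have hL₂d := (happ₂.tendsto _).comp ((hL₂x.comp hz).prodMk_nhds hd)
    exact ((happ.tendsto _).comp (hL₂d.prodMk_nhds hd)).div_const 2
  refine hL₂.congr' ?_
  filter_upwards [ht₀] with a ha
  rw [hLc a, hx]
  simp only [map_smul, _root_.smul_apply, smul_eq_mul, _root_.zero_apply]
  field_simp
  ring

end SecondOrder

theorem exists_ultrafilter_le_tendsto_inv_norm_smul {V : Type*} [NormedAddCommGroup V]
    [NormedSpace ℝ V] [ProperSpace V] {α : Type*} {l : Filter α} [l.NeBot] {p : α → V}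
    (hp : ∀ᶠ a in l, p a ≠ 0) :
    ∃ U : Ultrafilter α, ↑U ≤ l ∧ ∃ q : V, ‖q‖ = 1 ∧
      Tendsto (fun a => ‖p a‖⁻¹ • p a) U (𝓝 q) := by
  obtain ⟨q, hq, hUq⟩ := (isCompact_sphere (0 : V) 1).ultrafilter_le_nhds
    ((Ultrafilter.of l).map fun a => ‖p a‖⁻¹ • p a) <| by
      rw [Ultrafilter.coe_map, le_principal_iff, mem_map]
      filter_upwards [Ultrafilter.of_le l hp] with a ha
      simp [norm_smul, ha]
  exact ⟨Ultrafilter.of l, Ultrafilter.of_le l, q, by simpa using hq, hUq⟩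

theorem ContinuousLinearMap.apply_eq_sum_mul_apply_single {ι : Type*} [Fintype ι]
    [DecidableEq ι] (φ : (ι → ℝ) →L[ℝ] ℝ) (v : ι → ℝ) :
    φ v = ∑ k, v k * φ (Pi.single k 1) := by
  conv_lhs => rw [pi_eq_sum_univ' v, map_sum]
  simp only [map_smul, smul_eq_mul]

section Problem

variable {n m : ℕ}

theorem trace_jmul (A B : Matrix (Fin m) (Fin m) ℝ) : (jmul A B).trace = (A * B).trace := by
  simp only [jmul, trace_smul, trace_add, trace_mul_comm B A, smul_eq_mul]
  ring

theorem jmul_self (A : Matrix (Fin m) (Fin m) ℝ) : jmul A A = A * A := by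
  rw [jmul, ← two_smul ℝ (A * A), smul_smul]
  norm_num

theorem minner_eq_sum (A B : Matrix (Fin m) (Fin m) ℝ) :
    minner A B = ∑ i, ∑ j, A i j * B j i := by
  simp [minner, trace, mul_apply]

theorem minner_add_mul_self_eq {Λ Y : Matrix (Fin m) (Fin m) ℝ} (hΛY : Λ * Y = 0)
    (hYΛ : Y * Λ = 0) (Δ : Matrix (Fin m) (Fin m) ℝ) :
    minner ((Y + Δ) * (Y + Δ)) Λ = minner (Δ * Δ) Λ := by
  have hYYΛ : (Y * Y * Λ).trace = 0 := by rw [Matrix.mul_assoc, hYΛ, Matrix.mul_zero, trace_zero]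
  have hYΔΛ : (Y * Δ * Λ).trace = 0 := by
    rw [trace_mul_cycle, hΛY, Matrix.zero_mul, trace_zero]
  have hΔYΛ : (Δ * Y * Λ).trace = 0 := by rw [Matrix.mul_assoc, hYΛ, Matrix.mul_zero, trace_zero]
  simp only [minner, Matrix.add_mul, Matrix.mul_add, trace_add, hYYΛ, hYΔΛ, hΔYΛ, zero_add]

theorem dirDerivG_apply (G : (Fin n → ℝ) → Matrix (Fin m) (Fin m) ℝ) (x v : Fin n → ℝ)
    (i j : Fin m) : dirDerivG G x v i j = fderiv ℝ (fun y => G y i j) x v := by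
  simp [dirDerivG, pderivG, Matrix.sum_apply,
    ContinuousLinearMap.apply_eq_sum_mul_apply_single _ v]

theorem gradf_dotProduct (f : (Fin n → ℝ) → ℝ) (x v : Fin n → ℝ) :
    gradf f x ⬝ᵥ v = fderiv ℝ f x v := by
  rw [ContinuousLinearMap.apply_eq_sum_mul_apply_single _ v, dotProduct]
  exact Finset.sum_congr rfl fun k _ => mul_comm _ _

theorem adjDG_dotProduct (G : (Fin n → ℝ) → Matrix (Fin m) (Fin m) ℝ) (x v : Fin n → ℝ)
    (W : Matrix (Fin m) (Fin m) ℝ) : adjDG G x W ⬝ᵥ v = minner (dirDerivG G x v) W := by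
  simp only [adjDG, dotProduct, minner, dirDerivG, Finset.sum_mul, trace_sum, smul_mul_assoc,
    trace_smul, smul_eq_mul, mul_comm]

end Problem

section Lagrangian

variable {n m : ℕ} {f : (Fin n → ℝ) → ℝ} {G : (Fin n → ℝ) → Matrix (Fin m) (Fin m) ℝ}
  {x : Fin n → ℝ} {Λ : Matrix (Fin m) (Fin m) ℝ}

variable (f G Λ) in
def lagrangian (y : Fin n → ℝ) : ℝ :=
  f y - minner (G y) Λ

theorem contDiff_lagrangian (hf : ContDiff ℝ 2 f) (hG : ∀ i j, ContDiff ℝ 2 fun y => G y i j) :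
    ContDiff ℝ 2 (lagrangian f G Λ) := by
  unfold lagrangian
  simp only [minner_eq_sum]
  exact hf.sub (ContDiff.sum fun i _ => ContDiff.sum fun j _ => (hG i j).mul contDiff_const)

theorem hessQ_eq (v : Fin n → ℝ) :
    hessQ f G Λ x v = fderiv ℝ (fderiv ℝ (lagrangian f G Λ)) x v v := by
  rw [hessQ, iteratedFDeriv_two_apply]
  rfl

theorem hasFDerivAt_minner (hG : ∀ i j, DifferentiableAt ℝ (fun y => G y i j) x) :
    HasFDerivAt (fun y => minner (G y) Λ) (∑ i, ∑ j, Λ j i • fderiv ℝ (fun y => G y i j) x) x := by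
  simp only [minner_eq_sum]
  exact HasFDerivAt.fun_sum fun i _ => HasFDerivAt.fun_sum fun j _ =>
    (hG i j).hasFDerivAt.mul_const (Λ j i)

theorem fderiv_minner_apply (hG : ∀ i j, DifferentiableAt ℝ (fun y => G y i j) x)
    (v : Fin n → ℝ) : fderiv ℝ (fun y => minner (G y) Λ) x v = minner (dirDerivG G x v) Λ := by
  rw [(hasFDerivAt_minner hG).fderiv]
  simp [minner_eq_sum, dirDerivG_apply, mul_comm]

theorem fderiv_lagrangian_eq_zero (hf : DifferentiableAt ℝ f x)
    (hG : ∀ i j, DifferentiableAt ℝ (fun y => G y i j) x) (hgrad : gradf f x = adjDG G x Λ) :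
    fderiv ℝ (lagrangian f G Λ) x = 0 := by
  ext1 v
  unfold lagrangian
  rw [fderiv_fun_sub hf (hasFDerivAt_minner hG).differentiableAt, _root_.sub_apply,
    fderiv_minner_apply hG, ← gradf_dotProduct, ← adjDG_dotProduct, hgrad, sub_self,
    _root_.zero_apply]

theorem KKT1.mul_sqrt_eq_zero (h : KKT1 f G x Λ) : Λ * CFC.sqrt (G x) = 0 := by
  obtain ⟨-, hΛ, hGx, hcompl⟩ := h
  refine hΛ.mul_eq_zero_of_trace_mul_mul_self_eq_zero
    (CFC.sqrt_nonneg _).posSemidef.isHermitian ?_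
  rw [CFC.sqrt_mul_sqrt_self _ hGx.nonneg, ← trace_jmul, hcompl, trace_zero]

theorem KKT1.sqrt_mul_eq_zero (h : KKT1 f G x Λ) : CFC.sqrt (G x) * Λ = 0 := by
  have hΛ := isHermitian_iff_isSymm.1 h.2.1.isHermitian
  simpa [(isSymm_cfcSqrt (G x)).eq, hΛ.eq] using congrArg transpose h.mul_sqrt_eq_zero

end Lagrangian

section BlowUp

variable {n m : ℕ} {G : (Fin n → ℝ) → Matrix (Fin m) (Fin m) ℝ} {x : Fin n → ℝ}
  {Y : Matrix (Fin m) (Fin m) ℝ} {α : Type*} {l : Filter α} [l.NeBot] {t : α → ℝ}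
  {y : α → Fin n → ℝ} {Z : α → Matrix (Fin m) (Fin m) ℝ} {d₀ : Fin n → ℝ}
  {W₀ : Matrix (Fin m) (Fin m) ℝ}

theorem dirDerivG_eq_of_tendsto (hG : ∀ i j, DifferentiableAt ℝ (fun y => G y i j) x)
    (hY : G x = Y * Y) (hZ : ∀ᶠ a in l, G (y a) = Z a * Z a)
    (ht : Tendsto t l (𝓝 0)) (ht₀ : ∀ᶠ a in l, t a ≠ 0)
    (hd : Tendsto (fun a => (t a)⁻¹ • (y a - x)) l (𝓝 d₀))
    (hW : Tendsto (fun a => (t a)⁻¹ • (Z a - Y)) l (𝓝 W₀)) :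
    dirDerivG G x d₀ = (2 : ℝ) • jmul Y W₀ := by
  set W := fun a => (t a)⁻¹ • (Z a - Y)
  have hquot : ∀ᶠ a in l,
      Y * W a + W a * Y + t a • (W a * W a) = (t a)⁻¹ • (G (y a) - G x) := by
    filter_upwards [hZ, ht₀] with a hZa hta
    have hZa' : Z a = Y + t a • W a := by simp [W, smul_smul, hta]
    have hdiff : G (y a) - G x = t a • (Y * W a + W a * Y + t a • (W a * W a)) := by
      rw [hZa, hY, hZa']
      simp only [Matrix.add_mul, Matrix.mul_add, Matrix.smul_mul, Matrix.mul_smul, smul_add,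
        smul_smul]
      abel
    rw [hdiff, smul_smul, inv_mul_cancel₀ hta, one_smul]
  have hlim : Tendsto (fun a => (t a)⁻¹ • (G (y a) - G x)) l (𝓝 (Y * W₀ + W₀ * Y)) := by
    refine Tendsto.congr' hquot ?_
    simpa using ((tendsto_const_nhds.mul hW).add (hW.mul tendsto_const_nhds)).add
      (ht.smul (hW.mul hW))
  have hy : Tendsto (fun a => y a - x) l (𝓝 0) := by
    refine (zero_smul ℝ d₀ ▸ ht.smul hd).congr' ?_
    filter_upwards [ht₀] with a ha
    simp [smul_smul, ha]
  ext i j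
  have hlim_ij := ((hG i j).hasFDerivAt.hasFDerivWithinAt (s := univ)).lim hy (by simp) hd
  simp only [add_sub_cancel] at hlim_ij
  rw [dirDerivG_apply, tendsto_nhds_unique hlim_ij ((hlim.apply_nhds i).apply_nhds j), jmul,
    smul_smul]
  norm_num

theorem hessQ_add_two_mul_minner_nonpos_of_tendsto {f : (Fin n → ℝ) → ℝ}
    {Λ : Matrix (Fin m) (Fin m) ℝ} (hf : ContDiff ℝ 2 f) (hG : ∀ i j, ContDiff ℝ 2 fun y => G y i j)
    (hL : fderiv ℝ (lagrangian f G Λ) x = 0) (hΛY : Λ * Y = 0) (hYΛ : Y * Λ = 0)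
    (hY : G x = Y * Y) (hZ : ∀ᶠ a in l, G (y a) = Z a * Z a)
    (ht : Tendsto t l (𝓝 0)) (ht₀ : ∀ᶠ a in l, t a ≠ 0)
    (hd : Tendsto (fun a => (t a)⁻¹ • (y a - x)) l (𝓝 d₀))
    (hW : Tendsto (fun a => (t a)⁻¹ • (Z a - Y)) l (𝓝 W₀)) (hlt : ∀ᶠ a in l, f (y a) < f x) :
    hessQ f G Λ x d₀ + 2 * minner (jmul W₀ W₀) Λ ≤ 0 := by
  set d := fun a => (t a)⁻¹ • (y a - x)
  set W := fun a => (t a)⁻¹ • (Z a - Y)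
  have hsplit : ∀ᶠ a in l,
      (lagrangian f G Λ (x + t a • d a) - lagrangian f G Λ x) / t a ^ 2 + minner (W a * W a) Λ
        = (f (y a) - f x) / t a ^ 2 := by
    filter_upwards [hZ, ht₀] with a hZa hta
    have hya : x + t a • d a = y a := by simp [d, smul_smul, hta]
    have hZa' : Z a = Y + t a • W a := by simp [W, smul_smul, hta]
    have hfy : f (y a) = lagrangian f G Λ (y a) + t a ^ 2 * minner (W a * W a) Λ := by
      rw [lagrangian, hZa, hZa', minner_add_mul_self_eq hΛY hYΛ]
      simp only [minner, Matrix.smul_mul, Matrix.mul_smul, smul_smul, trace_smul, smul_eq_mul]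
      ring
    have hfx : f x = lagrangian f G Λ x := by
      rw [lagrangian, hY, ← add_zero Y, minner_add_mul_self_eq hΛY hYΛ]
      simp [minner]
    rw [hya, hfy, hfx]
    field_simp
    ring
  have hlim : Tendsto (fun a => (lagrangian f G Λ (x + t a • d a) - lagrangian f G Λ x) / t a ^ 2
      + minner (W a * W a) Λ) l
      (𝓝 (fderiv ℝ (fderiv ℝ (lagrangian f G Λ)) x d₀ d₀ / 2 + minner (W₀ * W₀) Λ)) :=
    ((contDiff_lagrangian hf hG).tendsto_sub_div_sq hL ht ht₀ hd).add
      ((continuous_id.matrix_trace.tendsto _).comp ((hW.mul hW).mul (tendsto_const_nhds (x := Λ))))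
  have hle : fderiv ℝ (fderiv ℝ (lagrangian f G Λ)) x d₀ d₀ / 2 + minner (W₀ * W₀) Λ ≤ 0 := by
    refine le_of_tendsto (hlim.congr' hsplit) ?_
    filter_upwards [hlt] with a ha
    exact div_nonpos_of_nonpos_of_nonneg (sub_nonpos.2 ha.le) (sq_nonneg _)
  rw [hessQ_eq, jmul_self]
  linarith

end BlowUp

section CriticalDirection

attribute [local instance] Matrix.normedAddCommGroup Matrix.normedSpace

variable {n m : ℕ} {f : (Fin n → ℝ) → ℝ} {G : (Fin n → ℝ) → Matrix (Fin m) (Fin m) ℝ}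
  {x : Fin n → ℝ} {Λ : Matrix (Fin m) (Fin m) ℝ}

theorem tendsto_sub_prod_sqrt_sub_sqrt (hG : Continuous G) {l : Filter (Fin n → ℝ)}
    (hlx : l ≤ 𝓝 x) (hfeas : ∀ᶠ y in l, 0 ≤ G y) :
    Tendsto (fun y => (y - x, CFC.sqrt (G y) - CFC.sqrt (G x))) l (𝓝 0) := by
  have hy : Tendsto (fun y => y - x) l (𝓝 0) := by
    simpa using (tendsto_id.mono_left hlx).sub_const x
  have hZ : Tendsto (fun y => CFC.sqrt (G y) - CFC.sqrt (G x)) l (𝓝 0) := by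
    simpa using (Matrix.tendsto_cfcSqrt ((hG.tendsto x).mono_left hlx) hfeas).sub_const
      (CFC.sqrt (G x))
  rw [← Prod.mk_zero_zero]
  exact hy.prodMk_nhds hZ

theorem exists_critical_direction_of_not_isLocalMinOn (hf : ContDiff ℝ 2 f)
    (hG : ∀ i j, ContDiff ℝ 2 fun y => G y i j) (hKKT : KKT1 f G x Λ)
    (hmin : ¬IsLocalMinOn f {y | (G y).PosSemidef} x) :
    ∃ v W, W.IsSymm ∧ ¬(v = 0 ∧ W = 0) ∧
      dirDerivG G x v = (2 : ℝ) • jmul (CFC.sqrt (G x)) W ∧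
      hessQ f G Λ x v + 2 * minner (jmul W W) Λ ≤ 0 := by
  set Y := CFC.sqrt (G x)
  set l := 𝓝[{y | (G y).PosSemidef} ∩ {y | f y < f x}] x
  have hl : l.NeBot := by
    simpa [l, IsLocalMinOn, IsMinFilter, Filter.not_eventually, frequently_iff_neBot,
      nhdsWithin_inter'] using hmin
  set p : (Fin n → ℝ) → (Fin n → ℝ) × Matrix (Fin m) (Fin m) ℝ :=
    fun y => (y - x, CFC.sqrt (G y) - Y)
  have hfeas : ∀ᶠ y in l, 0 ≤ G y := eventually_mem_nhdsWithin.mono fun _ hy => hy.1.nonneg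
  have hlt : ∀ᶠ y in l, f y < f x := eventually_mem_nhdsWithin.mono fun _ hy => hy.2
  have hp : Tendsto p l (𝓝 0) := tendsto_sub_prod_sqrt_sub_sqrt (continuous_pi fun i =>
    continuous_pi fun j => (hG i j).continuous) nhdsWithin_le_nhds hfeas
  have hp₀ : ∀ᶠ y in l, p y ≠ 0 := hlt.mono fun y hy hpy => by
    rw [sub_eq_zero.1 (congrArg Prod.fst hpy)] at hy
    exact lt_irrefl _ hy
  obtain ⟨U, hUl, ⟨d₀, W₀⟩, hq, hU⟩ := exists_ultrafilter_le_tendsto_inv_norm_smul hp₀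
  set t := fun y => ‖p y‖
  have ht : Tendsto t U (𝓝 0) := by simpa using (hp.mono_left hUl).norm
  have ht₀ : ∀ᶠ y in U, t y ≠ 0 := hUl (hp₀.mono fun y hy => norm_ne_zero_iff.2 hy)
  have hd : Tendsto (fun y => (t y)⁻¹ • (y - x)) U (𝓝 d₀) := hU.fst_nhds
  have hW : Tendsto (fun y => (t y)⁻¹ • (CFC.sqrt (G y) - Y)) U (𝓝 W₀) := hU.snd_nhds
  have hZ : ∀ᶠ y in U, G y = CFC.sqrt (G y) * CFC.sqrt (G y) :=
    hUl (hfeas.mono fun y hy => (CFC.sqrt_mul_sqrt_self _ hy).symm)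
  have hY : G x = Y * Y := (CFC.sqrt_mul_sqrt_self _ hKKT.2.2.1.nonneg).symm
  refine ⟨d₀, W₀, ?_, ?_, ?_, ?_⟩
  · exact (isClosed_eq continuous_id.matrix_transpose continuous_id).mem_of_tendsto hW
      (.of_forall fun y => ((isSymm_cfcSqrt _).sub (isSymm_cfcSqrt _)).smul _)
  · rintro ⟨rfl, rfl⟩
    simp at hq
  · exact dirDerivG_eq_of_tendsto (y := id)
      (fun i j => (hG i j).differentiable two_ne_zero x) hY hZ ht ht₀ hd hW
  · exact hessQ_add_two_mul_minner_nonpos_of_tendsto (y := id) hf hG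
      (fderiv_lagrangian_eq_zero (hf.differentiable two_ne_zero x)
        (fun i j => (hG i j).differentiable two_ne_zero x) hKKT.1)
      hKKT.mul_sqrt_eq_zero hKKT.sqrt_mul_eq_zero hY hZ ht ht₀ hd hW (hUl hlt)

end CriticalDirection

theorem stmt16_general {n m : ℕ} (f : (Fin n → ℝ) → ℝ) (G : (Fin n → ℝ) → Matrix (Fin m) (Fin m) ℝ)
    (hf : ContDiff ℝ 2 f) (hG : ∀ i j, ContDiff ℝ 2 fun y => G y i j)
    (x : Fin n → ℝ) (Λ : Matrix (Fin m) (Fin m) ℝ)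
    (hKKT : KKT1 f G x Λ) (hGx : (G x).PosSemidef)
    (hsosc : SOSCNLP f G x (psdSqrt hGx) Λ) :
    IsLocalMinOn f {y | (G y).PosSemidef} x := by
  by_contra hmin
  obtain ⟨v, W, hW, hvW, hlin, hle⟩ :=
    exists_critical_direction_of_not_isLocalMinOn hf hG hKKT hmin
  rw [← psdSqrt_eq_cfcSqrt hGx] at hlin
  exact (hsosc v W hW hvW hlin).not_ge hle

theorem stmt16 {n m : ℕ} (f : (Fin n → ℝ) → ℝ) (G : (Fin n → ℝ) → Matrix (Fin m) (Fin m) ℝ)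
    (hf : ContDiff ℝ 2 f) (hG : ∀ i j, ContDiff ℝ 2 fun y => G y i j)
    (x : Fin n → ℝ) (Λ : Matrix (Fin m) (Fin m) ℝ)
    (hKKT : KKT1 f G x Λ) (hGx : (G x).PosSemidef)
    (hsc : (G x).rank + Λ.rank = m)
    (hsosc : SOSCNLP f G x (psdSqrt hGx) Λ) :
    IsLocalMinOn f {y | (G y).PosSemidef} x :=
  stmt16_general f G hf hG x Λ hKKT hGx hsosc
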